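/- arXiv:2502.09632 — 2 statements merged into one kernel-verified Lean document; each statement's English description precedes it below -/
import Mathlib

section
/- Let ∇ be the operator on smooth vector-valued functions Y : ℝ → (Fin n → ℝ) given by (∇Y)(s) = Y'(s) + A(s) · Y(s) (matrix-vector product). Then the k-th iterate satisfies ∇^k Y = Σ_{a=0}^{k} C(k,a) · (P a) · Y^{(k-a)}, where P a are the recursively defined matrices with P 0 = 1, P (a+1) = (P a)' + A * (P a). -/
open Matrix Finset

noncomputable def mderiv {n : ℕ} (M : ℝ → Matrix (Fin n) (Fin n) ℝ) :
    ℝ → Matrix (Fin n) (Fin n) ℝ :=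
  fun s => Matrix.of fun i j => deriv (fun t => M t i j) s

noncomputable def vderiv {n : ℕ} (Y : ℝ → Fin n → ℝ) : ℝ → Fin n → ℝ :=
  fun s i => deriv (fun t => Y t i) s

def MSmooth {n : ℕ} (M : ℝ → Matrix (Fin n) (Fin n) ℝ) : Prop :=
  ∀ i j, ContDiff ℝ (⊤ : ℕ∞) (fun s => M s i j)

def VSmooth {n : ℕ} (Y : ℝ → Fin n → ℝ) : Prop :=
  ∀ i, ContDiff ℝ (⊤ : ℕ∞) (fun s => Y s i)

noncomputable def Psym {n : ℕ} (A : ℝ → Matrix (Fin n) (Fin n) ℝ) :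
    ℕ → ℝ → Matrix (Fin n) (Fin n) ℝ
  | 0 => fun _ => 1
  | k + 1 => fun s => mderiv (Psym A k) s + A s * Psym A k s

noncomputable def Qsym {n : ℕ} (A : ℝ → Matrix (Fin n) (Fin n) ℝ) :
    ℕ → ℝ → Matrix (Fin n) (Fin n) ℝ
  | 0 => fun _ => 1
  | k + 1 => fun s => mderiv (Qsym A k) s - Qsym A k s * A s

noncomputable def nabla {n : ℕ} (A : ℝ → Matrix (Fin n) (Fin n) ℝ)
    (Y : ℝ → Fin n → ℝ) : ℝ → Fin n → ℝ :=
  fun s => vderiv Y s + A s *ᵥ Y s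

lemma contDiff_top_deriv {f : ℝ → ℝ} (h : ContDiff ℝ (⊤ : ℕ∞) f) : ContDiff ℝ (⊤ : ℕ∞) (deriv f) :=
  (contDiff_succ_iff_deriv.mp (h.of_le (by simp))).2.2

lemma msmooth_mderiv {n : ℕ} {M : ℝ → Matrix (Fin n) (Fin n) ℝ} (h : MSmooth M) :
    MSmooth (mderiv M) := fun i j =>
  contDiff_top_deriv (h i j)

lemma msmooth_mul {n : ℕ} {M N : ℝ → Matrix (Fin n) (Fin n) ℝ}
    (hM : MSmooth M) (hN : MSmooth N) : MSmooth (fun s => M s * N s) := by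
  intro i j
  simp only [Matrix.mul_apply]
  exact ContDiff.sum fun l _ => (hM i l).mul (hN l j)

lemma msmooth_psym {n : ℕ} {A : ℝ → Matrix (Fin n) (Fin n) ℝ} (hA : MSmooth A) :
    ∀ a, MSmooth (Psym A a)
  | 0 => fun i j => contDiff_const
  | a + 1 => by
    have h := msmooth_psym hA a
    intro i j
    simp only [Psym, Matrix.add_apply]
    exact ((msmooth_mderiv h) i j).add ((msmooth_mul hA h) i j)

lemma vsmooth_vderiv {n : ℕ} {Y : ℝ → Fin n → ℝ} (h : VSmooth Y) : VSmooth (vderiv Y) :=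
  fun i => contDiff_top_deriv (h i)

lemma vsmooth_iter {n : ℕ} {Y : ℝ → Fin n → ℝ} (h : VSmooth Y) :
    ∀ m, VSmooth (vderiv^[m] Y)
  | 0 => h
  | m + 1 => by
    rw [Function.iterate_succ_apply']
    exact vsmooth_vderiv (vsmooth_iter h m)

lemma mulVec_diff {n : ℕ} {M : ℝ → Matrix (Fin n) (Fin n) ℝ} {V : ℝ → Fin n → ℝ}
    (hM : MSmooth M) (hV : VSmooth V) (i : Fin n) :
    Differentiable ℝ (fun t => (M t *ᵥ V t) i) := by
  simp only [Matrix.mulVec, dotProduct]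
  exact Differentiable.fun_sum fun j _ =>
    ((hM i j).differentiable (by simp)).mul ((hV j).differentiable (by simp))

lemma vderiv_mulVec {n : ℕ} {M : ℝ → Matrix (Fin n) (Fin n) ℝ} {V : ℝ → Fin n → ℝ}
    (hM : MSmooth M) (hV : VSmooth V) (s : ℝ) :
    vderiv (fun t => M t *ᵥ V t) s = mderiv M s *ᵥ V s + M s *ᵥ vderiv V s := by
  funext i
  simp only [vderiv, Matrix.mulVec, dotProduct, Pi.add_apply, mderiv, Matrix.of_apply]
  rw [deriv_fun_sum fun j _ =>
    (((hM i j).differentiable (by simp)).fun_mul ((hV j).differentiable (by simp))).differentiableAt]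
  rw [← Finset.sum_add_distrib]
  refine Finset.sum_congr rfl fun j _ => ?_
  rw [deriv_fun_mul (((hM i j).differentiable (by simp)).differentiableAt)
    (((hV j).differentiable (by simp)).differentiableAt)]

lemma vderiv_const_smul {n : ℕ} {c : ℝ} {V : ℝ → Fin n → ℝ} (s : ℝ)
    (hV : ∀ i, DifferentiableAt ℝ (fun t => V t i) s) :
    vderiv (fun t => c • V t) s = c • vderiv V s := by
  funext i
  simp only [vderiv, Pi.smul_apply, smul_eq_mul]
  exact deriv_const_mul c (hV i)

lemma vderiv_sum {n N : ℕ} {f : ℕ → ℝ → Fin n → ℝ} (s : ℝ)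
    (h : ∀ a ∈ Finset.range N, ∀ i, DifferentiableAt ℝ (fun t => f a t i) s) :
    vderiv (fun t => ∑ a ∈ Finset.range N, f a t) s =
      ∑ a ∈ Finset.range N, vderiv (f a) s := by
  funext i
  simp only [vderiv, Finset.sum_apply]
  exact deriv_fun_sum fun a ha => h a ha i

lemma pascal_smul {V : Type*} [AddCommMonoid V] [Module ℝ V] (k : ℕ) (g : ℕ → V) :
    ∑ a ∈ Finset.range (k + 1), (k.choose a : ℝ) • g (a + 1) +
      ∑ a ∈ Finset.range (k + 1), (k.choose a : ℝ) • g a =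
    ∑ a ∈ Finset.range (k + 2), ((k + 1).choose a : ℝ) • g a := by
  rw [Finset.sum_range_succ' (fun a => ((k + 1).choose a : ℝ) • g a) (k + 1),
      Finset.sum_range_succ' (fun a => (k.choose a : ℝ) • g a) k]
  simp only [Nat.choose_zero_right, Nat.cast_one, one_smul, Nat.choose_succ_succ,
    Nat.cast_add, add_smul]
  rw [Finset.sum_add_distrib]
  have h3 : ∑ a ∈ Finset.range (k + 1), (k.choose (a + 1) : ℝ) • g (a + 1) =
      ∑ a ∈ Finset.range k, (k.choose (a + 1) : ℝ) • g (a + 1) := by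
    rw [Finset.sum_range_succ, Nat.choose_succ_self]
    simp
  rw [h3]
  abel

theorem stmt5 {n : ℕ} (A : ℝ → Matrix (Fin n) (Fin n) ℝ) (hA : MSmooth A)
    (Y : ℝ → Fin n → ℝ) (hY : VSmooth Y) (k : ℕ) (s : ℝ) :
    (nabla A)^[k] Y s =
      ∑ a ∈ Finset.range (k + 1),
        (k.choose a : ℝ) • (Psym A a s *ᵥ vderiv^[k - a] Y s) := by
  induction k generalizing s with
  | zero =>
    simp [Psym, nabla]
  | succ k ih =>
    have hfun : (nabla A)^[k] Y =
        fun t => ∑ a ∈ Finset.range (k + 1),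
          (k.choose a : ℝ) • (Psym A a t *ᵥ vderiv^[k - a] Y t) := funext ih
    rw [Function.iterate_succ_apply']
    show vderiv ((nabla A)^[k] Y) s + A s *ᵥ ((nabla A)^[k] Y s) = _
    rw [ih s, hfun]
    -- differentiability of each summand
    have hdiff : ∀ a ∈ Finset.range (k + 1), ∀ i, DifferentiableAt ℝ
        (fun t => ((k.choose a : ℝ) • (Psym A a t *ᵥ vderiv^[k - a] Y t)) i) s := by
      intro a _ i
      simp only [Pi.smul_apply, smul_eq_mul]
      exact (differentiable_const _ |>.mul
        (mulVec_diff (msmooth_psym hA a) (vsmooth_iter hY (k - a)) i)).differentiableAt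
    rw [vderiv_sum s hdiff]
    have hterm : ∀ a ∈ Finset.range (k + 1),
        vderiv (fun t => (k.choose a : ℝ) • (Psym A a t *ᵥ vderiv^[k - a] Y t)) s =
          (k.choose a : ℝ) • (mderiv (Psym A a) s *ᵥ vderiv^[k - a] Y s) +
          (k.choose a : ℝ) • (Psym A a s *ᵥ vderiv^[k + 1 - a] Y s) := by
      intro a ha
      have ha' : a ≤ k := Nat.lt_succ_iff.mp (Finset.mem_range.mp ha)
      have hiter : vderiv (vderiv^[k - a] Y) s = vderiv^[k + 1 - a] Y s := by
        rw [← Function.iterate_succ_apply' vderiv, show (k - a).succ = k + 1 - a from by omega]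
      rw [vderiv_const_smul s
        (fun i => (mulVec_diff (msmooth_psym hA a) (vsmooth_iter hY (k - a)) i).differentiableAt),
        vderiv_mulVec (msmooth_psym hA a) (vsmooth_iter hY (k - a)), smul_add, hiter]
    have hms : A s *ᵥ (∑ a ∈ Finset.range (k + 1),
        (k.choose a : ℝ) • (Psym A a s *ᵥ vderiv^[k - a] Y s)) =
        ∑ a ∈ Finset.range (k + 1),
          A s *ᵥ ((k.choose a : ℝ) • (Psym A a s *ᵥ vderiv^[k - a] Y s)) := by
      simpa only [Matrix.mulVecLin_apply] using
        map_sum (Matrix.mulVecLin (A s))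
          (fun a => (k.choose a : ℝ) • (Psym A a s *ᵥ vderiv^[k - a] Y s))
          (Finset.range (k + 1))
    rw [Finset.sum_congr rfl hterm, hms]
    have hterm2 : ∀ a ∈ Finset.range (k + 1),
        A s *ᵥ ((k.choose a : ℝ) • (Psym A a s *ᵥ vderiv^[k - a] Y s)) =
          (k.choose a : ℝ) • ((A s * Psym A a s) *ᵥ vderiv^[k - a] Y s) := by
      intro a _
      rw [Matrix.mulVec_smul, Matrix.mulVec_mulVec]
    rw [Finset.sum_congr rfl hterm2, ← Finset.sum_add_distrib]
    have hshift : ∀ a ∈ Finset.range (k + 1),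
        ((k.choose a : ℝ) • (mderiv (Psym A a) s *ᵥ vderiv^[k - a] Y s) +
          (k.choose a : ℝ) • (Psym A a s *ᵥ vderiv^[k + 1 - a] Y s)) +
          (k.choose a : ℝ) • ((A s * Psym A a s) *ᵥ vderiv^[k - a] Y s) =
        (k.choose a : ℝ) • (Psym A (a + 1) s *ᵥ vderiv^[k + 1 - (a + 1)] Y s) +
          (k.choose a : ℝ) • (Psym A a s *ᵥ vderiv^[k + 1 - a] Y s) := by
      intro a ha
      have ha' : a ≤ k := Nat.lt_succ_iff.mp (Finset.mem_range.mp ha)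
      rw [show k + 1 - (a + 1) = k - a from by omega,
        show Psym A (a + 1) s = mderiv (Psym A a) s + A s * Psym A a s from rfl,
        Matrix.add_mulVec, smul_add]
      abel
    rw [Finset.sum_congr rfl hshift, Finset.sum_add_distrib]
    exact pascal_smul k (fun a => Psym A a s *ᵥ vderiv^[k + 1 - a] Y s)
end

section
/- Let J : ℝ → Matrix (Fin n) (Fin n) ℝ be smooth with J(s) invertible for all s, and let A, A' : ℝ → Matrix (Fin n) (Fin n) ℝ be smooth and related by the gauge transformation A = J * A' * J⁻¹ + J * (J⁻¹)'. Let P l be defined recursively from A (P 0 = 1, P (l+1) = (P l)' + A * (P l)) and P' l defined likewise from A'. Then for all l ≥ 0, P l = Σ_{p=0}^{l} C(l,p) · J * (P' p) * (J⁻¹)^{(l-p)}. -/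
open Matrix Finset

section helpers
variable {n : ℕ} {M N : ℝ → Matrix (Fin n) (Fin n) ℝ}

lemma MSmooth.entry_diff (hM : MSmooth M) (i j : Fin n) (s : ℝ) :
    DifferentiableAt ℝ (fun t => M t i j) s :=
  ((hM i j).differentiable (by simp)) s

lemma MSmooth.mul (hM : MSmooth M) (hN : MSmooth N) : MSmooth (fun s => M s * N s) := by
  intro i j
  simp only [Matrix.mul_apply]
  exact ContDiff.sum fun k _ => (hM i k).mul (hN k j)

lemma MSmooth.add (hM : MSmooth M) (hN : MSmooth N) : MSmooth (fun s => M s + N s) := by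
  intro i j
  simpa [Matrix.add_apply] using (hM i j).add (hN i j)

lemma MSmooth.mderiv (hM : MSmooth M) : MSmooth (mderiv M) := by
  intro i j
  have h2 : ContDiff ℝ (((⊤ : ℕ∞) : WithTop ℕ∞) + 1) (fun s => M s i j) := (hM i j).of_le (by exact_mod_cast le_top)
  exact (contDiff_succ_iff_deriv.mp h2).2.2

lemma msmooth_one : MSmooth (fun _ : ℝ => (1 : Matrix (Fin n) (Fin n) ℝ)) := by
  intro i j
  simp only [Matrix.one_apply]
  exact contDiff_const

lemma mderiv_mul (hM : MSmooth M) (hN : MSmooth N) :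
    mderiv (fun s => M s * N s) = fun s => mderiv M s * N s + M s * mderiv N s := by
  funext s
  ext i j
  have he : (fun t => (M t * N t) i j) = fun t => ∑ k, M t i k * N t k j := by
    funext t; simp [Matrix.mul_apply]
  simp only [mderiv, of_apply, Matrix.add_apply, Matrix.mul_apply, he]
  rw [deriv_fun_sum (A := fun k t => M t i k * N t k j) (fun k _ => ((hM.entry_diff i k s).mul (hN.entry_diff k j s)))]
  rw [← Finset.sum_add_distrib]
  refine Finset.sum_congr rfl fun k _ => ?_
  rw [deriv_fun_mul (hM.entry_diff i k s) (hN.entry_diff k j s)]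

lemma mderiv_one : mderiv (fun _ : ℝ => (1 : Matrix (Fin n) (Fin n) ℝ)) = fun _ => 0 := by
  funext s
  ext i j
  simp [mderiv]

lemma mderiv_sum_smul {m : ℕ} {c : ℕ → ℝ} {F : ℕ → ℝ → Matrix (Fin n) (Fin n) ℝ}
    (hF : ∀ p ∈ Finset.range m, MSmooth (F p)) :
    mderiv (fun s => ∑ p ∈ Finset.range m, c p • F p s) =
      fun s => ∑ p ∈ Finset.range m, c p • mderiv (F p) s := by
  funext s
  ext i j
  have he : (fun t => (∑ p ∈ Finset.range m, c p • F p t) i j)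
      = fun t => ∑ p ∈ Finset.range m, c p * F p t i j := by
    funext t; simp [Matrix.sum_apply, Matrix.smul_apply]
  simp only [mderiv, of_apply, Matrix.sum_apply, Matrix.smul_apply, he, smul_eq_mul]
  rw [deriv_fun_sum (fun p hp => ((hF p hp).entry_diff i j s).const_mul (c p))]
  refine Finset.sum_congr rfl fun p hp => ?_
  rw [deriv_const_mul _ ((hF p hp).entry_diff i j s)]

lemma contDiff_finset_prod {ι : Type*} (s : Finset ι) (f : ι → ℝ → ℝ)
    (h : ∀ i ∈ s, ContDiff ℝ (⊤ : ℕ∞) (f i)) : ContDiff ℝ (⊤ : ℕ∞) fun x => ∏ i ∈ s, f i x := by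
  classical
  induction s using Finset.cons_induction with
  | empty => simpa using contDiff_const
  | cons a s ha ih =>
    simp only [Finset.prod_cons]
    exact (h a (Finset.mem_cons_self _ _)).mul
      (ih fun i hi => h i (Finset.mem_cons_of_mem hi))

lemma msmooth_det (hM : MSmooth M) : ContDiff ℝ (⊤ : ℕ∞) (fun s => (M s).det) := by
  have he : (fun s => (M s).det)
      = fun s => ∑ σ : Equiv.Perm (Fin n), ((Equiv.Perm.sign σ : ℤ) : ℝ) * ∏ i, M s (σ i) i := by
    funext s; rw [Matrix.det_apply']
  rw [he]
  exact ContDiff.sum fun σ _ =>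
    contDiff_const.mul (contDiff_finset_prod _ _ fun i _ => hM (σ i) i)

lemma msmooth_inv {J : ℝ → Matrix (Fin n) (Fin n) ℝ} (hJ : MSmooth J)
    (hJinv : ∀ s, IsUnit (J s)) : MSmooth (fun s => (J s)⁻¹) := by
  have hdet : ∀ s, (J s).det ≠ 0 := fun s =>
    (((Matrix.isUnit_iff_isUnit_det _).mp (hJinv s))).ne_zero
  intro i j
  have h3 : ContDiff ℝ (⊤ : ℕ∞) (fun s => (J s).adjugate i j) := by
    simp only [Matrix.adjugate_apply]
    refine msmooth_det (M := fun s => (J s).updateRow j (Pi.single i 1)) ?_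
    intro a b
    rcases eq_or_ne a j with rfl | hne
    · simp only [Matrix.updateRow_self]; exact contDiff_const
    · simp only [Matrix.updateRow_ne hne]; exact hJ a b
  have he : (fun s => (J s)⁻¹ i j) = fun s => ((J s).det)⁻¹ * (J s).adjugate i j := by
    funext s
    rw [Matrix.inv_def, Ring.inverse_eq_inv]
    simp [Matrix.smul_apply]
  rw [he]
  exact ((msmooth_det hJ).inv hdet).mul h3

end helpers

theorem stmt11 {n : ℕ} (J A A' : ℝ → Matrix (Fin n) (Fin n) ℝ)
    (hJ : MSmooth J) (hJinv : ∀ s, IsUnit (J s)) (hA : MSmooth A) (hA' : MSmooth A')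
    (hgauge : ∀ s, A s = J s * A' s * (J s)⁻¹ + J s * mderiv (fun t => (J t)⁻¹) s) :
    ∀ (l : ℕ) (s : ℝ),
      Psym A l s =
        ∑ p ∈ Finset.range (l + 1),
          (l.choose p : ℝ) • (J s * Psym A' p s * mderiv^[l - p] (fun t => (J t)⁻¹) s) := by
  set K : ℝ → Matrix (Fin n) (Fin n) ℝ := fun t => (J t)⁻¹ with hKdef
  have hKs : MSmooth K := msmooth_inv hJ hJinv
  have hdetu : ∀ s, IsUnit (J s).det := fun s => (Matrix.isUnit_iff_isUnit_det _).mp (hJinv s)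
  have hJK : ∀ s, J s * K s = 1 := fun s => Matrix.mul_nonsing_inv _ (hdetu s)
  have hKJ : ∀ s, K s * J s = 1 := fun s => Matrix.nonsing_inv_mul _ (hdetu s)
  have h0 : ∀ s, mderiv J s * K s + J s * mderiv K s = 0 := by
    intro s
    have h1 := congrFun (mderiv_mul hJ hKs) s
    have h2 : (fun s => J s * K s) = fun _ => 1 := funext hJK
    rw [h2, mderiv_one] at h1
    exact h1.symm
  have hAJ : ∀ s, A s * J s = J s * A' s - mderiv J s := by
    intro s
    have hg : A s = J s * A' s * K s + J s * mderiv K s := hgauge s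
    have hKdJ : J s * mderiv K s * J s = - mderiv J s := by
      have := h0 s
      have h3 : J s * mderiv K s = -(mderiv J s * K s) := by
        rw [eq_neg_iff_add_eq_zero, add_comm]; exact this
      rw [h3, neg_mul, mul_assoc, hKJ s, mul_one]
    calc A s * J s = (J s * A' s * K s + J s * mderiv K s) * J s := by rw [← hg]
      _ = J s * A' s * (K s * J s) + J s * mderiv K s * J s := by noncomm_ring
      _ = J s * A' s - mderiv J s := by rw [hKJ s, hKdJ, mul_one, sub_eq_add_neg]
  have hD : ∀ k, MSmooth (mderiv^[k] K) := by
    intro k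
    induction k with
    | zero => simpa using hKs
    | succ k ih => rw [Function.iterate_succ_apply']; exact ih.mderiv
  have hP' : ∀ p, MSmooth (Psym A' p) := by
    intro p
    induction p with
    | zero => exact msmooth_one
    | succ p ih =>
      show MSmooth (fun s => mderiv (Psym A' p) s + A' s * Psym A' p s)
      exact ih.mderiv.add (hA'.mul ih)
  have step : ∀ (M : ℝ → Matrix (Fin n) (Fin n) ℝ), MSmooth M → ∀ (k : ℕ) (s : ℝ),
      mderiv (fun t => J t * M t * mderiv^[k] K t) s + A s * (J s * M s * mderiv^[k] K s)
      = J s * (mderiv M s + A' s * M s) * mderiv^[k] K s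
        + J s * M s * mderiv^[k+1] K s := by
    intro M hM k s
    have h1 := congrFun (mderiv_mul (hJ.mul hM) (hD k)) s
    have h2 := congrFun (mderiv_mul hJ hM) s
    have h3 : A s * (J s * M s * mderiv^[k] K s)
        = (J s * A' s - mderiv J s) * M s * mderiv^[k] K s := by
      rw [← mul_assoc, ← mul_assoc, ← hAJ s]
    rw [Function.iterate_succ_apply'] at *
    rw [h1, h2, h3]
    noncomm_ring
  suffices hmain : ∀ l, Psym A l = fun s => ∑ p ∈ Finset.range (l + 1),
      (l.choose p : ℝ) • (J s * Psym A' p s * mderiv^[l - p] K s) by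
    intro l s
    exact congrFun (hmain l) s
  intro l
  induction l with
  | zero =>
    funext s
    show (1 : Matrix (Fin n) (Fin n) ℝ) = _
    simp [Psym, hJK s]
  | succ l ih =>
    funext s
    show mderiv (Psym A l) s + A s * Psym A l s = _
    rw [ih]
    rw [mderiv_sum_smul (c := fun p => (l.choose p : ℝ))
      (F := fun p s => J s * Psym A' p s * mderiv^[l - p] K s)
      (fun p _ => (hJ.mul (hP' p)).mul (hD (l - p)))]
    rw [Finset.mul_sum, ← Finset.sum_add_distrib]
    have hsum : ∀ p ∈ Finset.range (l + 1),
        (l.choose p : ℝ) • mderiv (fun t => J t * Psym A' p t * mderiv^[l - p] K t) s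
          + A s * ((l.choose p : ℝ) • (J s * Psym A' p s * mderiv^[l - p] K s))
        = (l.choose p : ℝ) • (J s * Psym A' (p + 1) s * mderiv^[l - p] K s)
          + (l.choose p : ℝ) • (J s * Psym A' p s * mderiv^[l + 1 - p] K s) := by
      intro p hp
      have hp' : p ≤ l := Nat.lt_succ_iff.mp (Finset.mem_range.mp hp)
      rw [mul_smul_comm, ← smul_add, step _ (hP' p) (l - p) s,
        show l - p + 1 = l + 1 - p by omega, smul_add]
      rfl
    rw [Finset.sum_congr rfl hsum, Finset.sum_add_distrib]
    -- now prove RHS equals S1 + S2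
    rw [Finset.sum_range_succ' (fun p =>
      ((l + 1).choose p : ℝ) • (J s * Psym A' p s * mderiv^[l + 1 - p] K s)) (l + 1)]
    have e1 : ∀ p ∈ Finset.range (l + 1),
        ((l + 1).choose (p + 1) : ℝ) • (J s * Psym A' (p + 1) s * mderiv^[l + 1 - (p + 1)] K s)
        = (l.choose p : ℝ) • (J s * Psym A' (p + 1) s * mderiv^[l - p] K s)
          + (l.choose (p + 1) : ℝ) • (J s * Psym A' (p + 1) s * mderiv^[l + 1 - (p + 1)] K s) := by
      intro p _
      rw [Nat.choose_succ_succ, Nat.cast_add, add_smul, Nat.succ_sub_succ]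
    rw [Finset.sum_congr rfl e1, Finset.sum_add_distrib]
    have e2 : (∑ p ∈ Finset.range (l + 1),
          (l.choose (p + 1) : ℝ) • (J s * Psym A' (p + 1) s * mderiv^[l + 1 - (p + 1)] K s))
        + ((l + 1).choose 0 : ℝ) • (J s * Psym A' 0 s * mderiv^[l + 1 - 0] K s)
        = ∑ p ∈ Finset.range (l + 1),
          (l.choose p : ℝ) • (J s * Psym A' p s * mderiv^[l + 1 - p] K s) := by
      have e3 := Finset.sum_range_succ'
        (fun p => (l.choose p : ℝ) • (J s * Psym A' p s * mderiv^[l + 1 - p] K s)) (l + 1)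
      rw [Finset.sum_range_succ] at e3
      simp only [Nat.choose_succ_self, Nat.cast_zero, zero_smul, add_zero, Nat.choose_zero_right,
        Nat.cast_one] at e3 ⊢
      exact e3.symm
    rw [add_assoc, e2]
end
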